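/- arXiv:1104.3769 — 5 statements merged into one kernel-verified Lean document; each statement's English description precedes it below -/
import Mathlib

section
/- Let u ≥ 0 be a real number with 2u < 1, and set γ₂ := 2u/(1−2u). Let α, β, c₂_prev, c₁_prev, ĉ₂_prev, ĉ₁_prev, ĉ be real numbers, and define the errors e₂_prev := ĉ₂_prev − c₂_prev and e₁_prev := ĉ₁_prev − c₁_prev. Suppose the exact recursion c = c₂_prev − α·c₁_prev − β² holds, and the computed value satisfies (1+ε)·ĉ = ĉ₂_prev·(1+δ) − α·ĉ₁_prev·(1+θ₂) − β²·(1+η) for some real numbers δ, η, ε, θ₂ with |δ| ≤ u, |η| ≤ u, |ε| ≤ u, |θ₂| ≤ γ₂. Then the error e := ĉ − c satisfies |e| ≤ |e₂_prev| + |α·e₁_prev| + u·(|ĉ₂_prev| + |β²| + |ĉ|) + γ₂·|α·ĉ₁_prev|. -/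
/-!
Subtracting the exact recursion from the computed one, `(1 + ε)` moved to the right-hand side,
writes the error as the propagated error `e₂ − α e₁` plus the four local rounding terms
`δ ĉ₂ − θ₂ α ĉ₁ − η β² − ε ĉ`; the triangle inequality bounds each term separately.
-/

lemma abs_mul_le_mul_abs_of_abs_le {R : Type*} [Ring R] [LinearOrder R] [IsOrderedRing R]
    {δ u : R} (hδ : |δ| ≤ u) (x : R) : |δ * x| ≤ u * |x| := by
  rw [abs_mul]
  exact mul_le_mul_of_nonneg_right hδ (abs_nonneg x)

lemma abs_sub_sub_sub_le {G : Type*} [AddCommGroup G] [LinearOrder G] [IsOrderedAddMonoid G]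
    (a b c d : G) : |a - b - c - d| ≤ |a| + |b| + |c| + |d| :=
  calc |a - b - c - d| ≤ |a - b - c| + |d| := abs_sub _ _
    _ ≤ |a - b| + |c| + |d| := by gcongr; exact abs_sub _ _
    _ ≤ |a| + |b| + |c| + |d| := by gcongr; exact abs_sub _ _

theorem stmt_4_general (u : ℝ)
    (α β c₂prev c₁prev c₂hatprev c₁hatprev chat c δ η ε θ₂ : ℝ)
    (hδ : |δ| ≤ u) (hη : |η| ≤ u) (hε : |ε| ≤ u)
    (hθ : |θ₂| ≤ 2 * u / (1 - 2 * u))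
    (hexact : c = c₂prev - α * c₁prev - β ^ 2)
    (hcomp : (1 + ε) * chat =
      c₂hatprev * (1 + δ) - α * c₁hatprev * (1 + θ₂) - β ^ 2 * (1 + η)) :
    |chat - c| ≤ |c₂hatprev - c₂prev| + |α * (c₁hatprev - c₁prev)|
      + u * (|c₂hatprev| + |β ^ 2| + |chat|)
      + (2 * u / (1 - 2 * u)) * |α * c₁hatprev| := by
  have error_eq : chat - c = ((c₂hatprev - c₂prev) - α * (c₁hatprev - c₁prev))
      + (δ * c₂hatprev - θ₂ * (α * c₁hatprev) - η * β ^ 2 - ε * chat) := by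
    subst hexact
    linear_combination hcomp
  rw [error_eq]
  calc _ ≤ |(c₂hatprev - c₂prev) - α * (c₁hatprev - c₁prev)|
        + |δ * c₂hatprev - θ₂ * (α * c₁hatprev) - η * β ^ 2 - ε * chat| := abs_add_le _ _
    _ ≤ (|c₂hatprev - c₂prev| + |α * (c₁hatprev - c₁prev)|)
        + (|δ * c₂hatprev| + |θ₂ * (α * c₁hatprev)| + |η * β ^ 2| + |ε * chat|) :=
      add_le_add (abs_sub _ _) (abs_sub_sub_sub_le _ _ _ _)
    _ ≤ _ := by
      linarith [abs_mul_le_mul_abs_of_abs_le hδ c₂hatprev,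
        abs_mul_le_mul_abs_of_abs_le hθ (α * c₁hatprev),
        abs_mul_le_mul_abs_of_abs_le hη (β ^ 2), abs_mul_le_mul_abs_of_abs_le hε chat]

/-- Theorem 4.3 (inductive case) of the paper: error bound for
`ĉ₂⁽ⁱ⁾ = fl[fl[ĉ₂⁽ⁱ⁻¹⁾ − fl[αᵢ ĉ₁⁽ⁱ⁻¹⁾]] − fl[βᵢ²]]`, `i ≥ 3`. -/
theorem stmt_4 (u : ℝ) (hu : 0 ≤ u) (h2u : 2 * u < 1)
    (α β c₂prev c₁prev c₂hatprev c₁hatprev chat c δ η ε θ₂ : ℝ)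
    (hδ : |δ| ≤ u) (hη : |η| ≤ u) (hε : |ε| ≤ u)
    (hθ : |θ₂| ≤ 2 * u / (1 - 2 * u))
    (hexact : c = c₂prev - α * c₁prev - β ^ 2)
    (hcomp : (1 + ε) * chat =
      c₂hatprev * (1 + δ) - α * c₁hatprev * (1 + θ₂) - β ^ 2 * (1 + η)) :
    |chat - c| ≤ |c₂hatprev - c₂prev| + |α * (c₁hatprev - c₁prev)|
      + u * (|c₂hatprev| + |β ^ 2| + |chat|)
      + (2 * u / (1 - 2 * u)) * |α * c₁hatprev| :=
  stmt_4_general u α β c₂prev c₁prev c₂hatprev c₁hatprev chat c δ η ε θ₂ hδ hη hε hθ hexact hcomp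
end

section
/- Let u ≥ 0 be a real number with 2u < 1, and set γ₂ := 2u/(1−2u). Let α, β, c₁_prev, c₂_prev, ĉ₁_prev, ĉ₂_prev, ĉ be real numbers, with errors e₁_prev := ĉ₁_prev − c₁_prev and e₂_prev := ĉ₂_prev − c₂_prev. Suppose the exact recursion c = −α·c₁_prev − β²·c₂_prev holds, and the computed value satisfies −(1+ε)·ĉ = α·ĉ₁_prev·(1+δ) + β²·ĉ₂_prev·(1+θ₂) for some real δ, ε, θ₂ with |δ| ≤ u, |ε| ≤ u, |θ₂| ≤ γ₂. Then the error e := ĉ − c satisfies |e| ≤ |α·e₁_prev| + |β²·e₂_prev| + u·(|α·ĉ₁_prev| + |ĉ|) + γ₂·|β²·ĉ₂_prev|. -/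
/-- Theorem 4.4 (case j = i) of the paper: error bound for the leading new
coefficient `ĉᵢ⁽ⁱ⁾ = −fl[fl[αᵢ ĉᵢ₋₁⁽ⁱ⁻¹⁾] + fl[βᵢ² ĉᵢ₋₂⁽ⁱ⁻²⁾]]`. -/
theorem stmt_5 (u : ℝ) (hu : 0 ≤ u) (h2u : 2 * u < 1)
    (α β c₁prev c₂prev c₁hatprev c₂hatprev chat c δ ε θ₂ : ℝ)
    (hδ : |δ| ≤ u) (hε : |ε| ≤ u)
    (hθ : |θ₂| ≤ 2 * u / (1 - 2 * u))
    (hexact : c = -(α * c₁prev) - β ^ 2 * c₂prev)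
    (hcomp : -((1 + ε) * chat) =
      α * c₁hatprev * (1 + δ) + β ^ 2 * c₂hatprev * (1 + θ₂)) :
    |chat - c| ≤ |α * (c₁hatprev - c₁prev)| + |β ^ 2 * (c₂hatprev - c₂prev)|
      + u * (|α * c₁hatprev| + |chat|)
      + (2 * u / (1 - 2 * u)) * |β ^ 2 * c₂hatprev| := by
  have key : chat - c = -(α*(c₁hatprev-c₁prev)) - β^2*(c₂hatprev-c₂prev)
      - δ*(α*c₁hatprev) - θ₂*(β^2*c₂hatprev) - ε*chat := by
    linear_combination -hexact - hcomp
  rw [key]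
  have h1 : |δ*(α*c₁hatprev)| ≤ u * |α*c₁hatprev| := by
    rw [abs_mul]; exact mul_le_mul_of_nonneg_right hδ (abs_nonneg _)
  have h2 : |θ₂*(β^2*c₂hatprev)| ≤ (2*u/(1-2*u)) * |β^2*c₂hatprev| := by
    rw [abs_mul]; exact mul_le_mul_of_nonneg_right hθ (abs_nonneg _)
  have h3 : |ε*chat| ≤ u * |chat| := by
    rw [abs_mul]; exact mul_le_mul_of_nonneg_right hε (abs_nonneg _)
  calc |-(α*(c₁hatprev-c₁prev)) - β^2*(c₂hatprev-c₂prev)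
      - δ*(α*c₁hatprev) - θ₂*(β^2*c₂hatprev) - ε*chat|
      ≤ |-(α*(c₁hatprev-c₁prev)) - β^2*(c₂hatprev-c₂prev)
      - δ*(α*c₁hatprev) - θ₂*(β^2*c₂hatprev)| + |ε*chat| := abs_sub _ _
    _ ≤ |-(α*(c₁hatprev-c₁prev)) - β^2*(c₂hatprev-c₂prev)
      - δ*(α*c₁hatprev)| + |θ₂*(β^2*c₂hatprev)| + |ε*chat| := by
        gcongr; exact abs_sub _ _
    _ ≤ |-(α*(c₁hatprev-c₁prev)) - β^2*(c₂hatprev-c₂prev)|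
      + |δ*(α*c₁hatprev)| + |θ₂*(β^2*c₂hatprev)| + |ε*chat| := by
        gcongr; exact abs_sub _ _
    _ ≤ |α*(c₁hatprev-c₁prev)| + |β^2*(c₂hatprev-c₂prev)|
      + |δ*(α*c₁hatprev)| + |θ₂*(β^2*c₂hatprev)| + |ε*chat| := by
        gcongr
        calc |-(α*(c₁hatprev-c₁prev)) - β^2*(c₂hatprev-c₂prev)|
            ≤ |-(α*(c₁hatprev-c₁prev))| + |β^2*(c₂hatprev-c₂prev)| := abs_sub _ _
          _ = |α*(c₁hatprev-c₁prev)| + |β^2*(c₂hatprev-c₂prev)| := by rw [abs_neg]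
    _ ≤ |α*(c₁hatprev-c₁prev)| + |β^2*(c₂hatprev-c₂prev)|
      + u*|α*c₁hatprev| + (2*u/(1-2*u))*|β^2*c₂hatprev| + u*|chat| := by
        gcongr
    _ = |α*(c₁hatprev-c₁prev)| + |β^2*(c₂hatprev-c₂prev)|
      + u * (|α*c₁hatprev| + |chat|)
      + (2*u/(1-2*u)) * |β^2*c₂hatprev| := by ring
end

section
/- Let u ≥ 0 be a real number with 2u < 1, and set γ₂ := 2u/(1−2u). Let α, β and c_a, c_b, c_d, ĉ_a, ĉ_b, ĉ_d, ĉ be real numbers, with errors e_a := ĉ_a − c_a, e_b := ĉ_b − c_b, e_d := ĉ_d − c_d. Suppose the exact recursion c = c_a − α·c_b − β²·c_d holds, and the computed value satisfies (1+ε)·ĉ = ĉ_a·(1+δ) − α·ĉ_b·(1+θ₂) − β²·ĉ_d·(1+θ₂′) for some real δ, ε, θ₂, θ₂′ with |δ| ≤ u, |ε| ≤ u, |θ₂| ≤ γ₂, |θ₂′| ≤ γ₂. Then the error e := ĉ − c satisfies |e| ≤ |e_a| + |α·e_b| + |β²·e_d| + u·(|ĉ_a| + |ĉ|) + γ₂·(|α·ĉ_b|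 + |β²·ĉ_d|). -/
/-!
Subtracting the exact recursion from the computed one splits the error `ĉ - c` into the
propagated error `e_a - α e_b - β² e_d` plus the local rounding error
`δ ĉ_a - θ₂ α ĉ_b - θ₂' β² ĉ_d - ε ĉ`; the triangle inequality bounds each part.
-/

section ErrorBound

variable {R : Type*} [CommRing R] [LinearOrder R] [IsStrictOrderedRing R]

theorem abs_sub_sub_le (x y z : R) : |x - y - z| ≤ |x| + |y| + |z| :=
  (abs_sub _ _).trans (add_le_add_left (abs_sub _ _) _)

theorem abs_mul_le_of_abs_le {θ g : R} (hθ : |θ| ≤ g) (x : R) : |θ * x| ≤ g * |x| := by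
  rw [abs_mul]
  exact mul_le_mul_of_nonneg_right hθ (abs_nonneg x)

theorem abs_rounding_error_le {u g δ ε θ θ' x y z w : R}
    (hδ : |δ| ≤ u) (hε : |ε| ≤ u) (hθ : |θ| ≤ g) (hθ' : |θ'| ≤ g) :
    |δ * x - θ * y - θ' * z - ε * w| ≤ u * (|x| + |w|) + g * (|y| + |z|) := by
  calc |δ * x - θ * y - θ' * z - ε * w|
      ≤ |δ * x| + |θ * y| + |θ' * z| + |ε * w| :=
        (abs_sub _ _).trans (add_le_add_left (abs_sub_sub_le _ _ _) _)
    _ ≤ u * |x| + g * |y| + g * |z| + u * |w| := by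
        gcongr
        exacts [abs_mul_le_of_abs_le hδ x, abs_mul_le_of_abs_le hθ y,
          abs_mul_le_of_abs_le hθ' z, abs_mul_le_of_abs_le hε w]
    _ = u * (|x| + |w|) + g * (|y| + |z|) := by ring

theorem sub_eq_propagated_add_rounding {a b ca cb cd cahat cbhat cdhat chat c δ ε θ θ' : R}
    (hexact : c = ca - a * cb - b * cd)
    (hcomp : (1 + ε) * chat = cahat * (1 + δ) - a * cbhat * (1 + θ) - b * cdhat * (1 + θ')) :
    chat - c = ((cahat - ca) - a * (cbhat - cb) - b * (cdhat - cd))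
      + (δ * cahat - θ * (a * cbhat) - θ' * (b * cdhat) - ε * chat) := by
  rw [hexact]
  linear_combination hcomp

end ErrorBound

theorem stmt_6_general (u : ℝ)
    (α β ca cb cd cahat cbhat cdhat chat c δ ε θ₂ θ₂' : ℝ)
    (hδ : |δ| ≤ u) (hε : |ε| ≤ u)
    (hθ : |θ₂| ≤ 2 * u / (1 - 2 * u)) (hθ' : |θ₂'| ≤ 2 * u / (1 - 2 * u))
    (hexact : c = ca - α * cb - β ^ 2 * cd)
    (hcomp : (1 + ε) * chat =
      cahat * (1 + δ) - α * cbhat * (1 + θ₂) - β ^ 2 * cdhat * (1 + θ₂')) :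
    |chat - c| ≤ |cahat - ca| + |α * (cbhat - cb)| + |β ^ 2 * (cdhat - cd)|
      + u * (|cahat| + |chat|)
      + (2 * u / (1 - 2 * u)) * (|α * cbhat| + |β ^ 2 * cdhat|) := by
  rw [sub_eq_propagated_add_rounding hexact hcomp, add_assoc _ (u * _)]
  exact (abs_add_le _ _).trans
    (add_le_add (abs_sub_sub_le _ _ _) (abs_rounding_error_le hδ hε hθ hθ'))

/-- Theorem 4.4 (case 3 ≤ j < i) of the paper: error bound for
`ĉⱼ⁽ⁱ⁾ = fl[fl[ĉⱼ⁽ⁱ⁻¹⁾ − fl[αᵢ ĉⱼ₋₁⁽ⁱ⁻¹⁾]] − fl[βᵢ² ĉⱼ₋₂⁽ⁱ⁻²⁾]]`. -/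
theorem stmt_6 (u : ℝ) (hu : 0 ≤ u) (h2u : 2 * u < 1)
    (α β ca cb cd cahat cbhat cdhat chat c δ ε θ₂ θ₂' : ℝ)
    (hδ : |δ| ≤ u) (hε : |ε| ≤ u)
    (hθ : |θ₂| ≤ 2 * u / (1 - 2 * u)) (hθ' : |θ₂'| ≤ 2 * u / (1 - 2 * u))
    (hexact : c = ca - α * cb - β ^ 2 * cd)
    (hcomp : (1 + ε) * chat =
      cahat * (1 + δ) - α * cbhat * (1 + θ₂) - β ^ 2 * cdhat * (1 + θ₂')) :
    |chat - c| ≤ |cahat - ca| + |α * (cbhat - cb)| + |β ^ 2 * (cdhat - cd)|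
      + u * (|cahat| + |chat|)
      + (2 * u / (1 - 2 * u)) * (|α * cbhat| + |β ^ 2 * cdhat|) :=
  stmt_6_general u α β ca cb cd cahat cbhat cdhat chat c δ ε θ₂ θ₂' hδ hε hθ hθ' hexact hcomp
end

section
/- Let u ≥ 0 be a real number, let i ≥ 3 be an integer with (i+1)·u < 1, and set γₘ := m·u/(1−m·u). Let α, ĉ_prev, c_prev, and for m = 1,…,i−2 real numbers tₘ (representing h_{i−m,i}·βᵢ⋯β_{i−m+1}) together with exact coefficients dₘ and computed coefficients d̂ₘ, and a real number w (representing h_{1i}·βᵢ⋯β₂) be given; define e_prev := ĉ_prev − c_prev and eₘ := d̂ₘ − dₘ. Suppose the exact value is c = −α·c_prev − Σ_{m=1}^{i−2} tₘ·dₘ − w, and the computed value ĉ satisfies −(1+ε)·ĉ = α·ĉ_prev·(1+δ) + t₁·d̂₁·(1+θᵢ) + Σ_{m=2}^{i−2} tₘ·d̂ₘ·(1+θ_{i+1}⁽ᵐ⁾) + w·(1+θ̂ᵢ), where |δ| ≤ u, |ε| ≤ u, |θᵢ| ≤ γᵢ, |θ̂ᵢ| ≤ γᵢ, and |θ_{i+1}⁽ᵐ⁾|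 ≤ γ_{i+1} for each m. Then the error e := ĉ − c satisfies |e| ≤ |α·e_prev| + Σ_{m=1}^{i−2} |tₘ·eₘ| + γ_{i+1}·Σ_{m=2}^{i−2} |tₘ·d̂ₘ| + γᵢ·(|t₁·d̂₁| + |w|) + u·(|ĉ| + |α·ĉ_prev|). -/
/-!
Subtracting the exact recurrence from the backward-error form of the computed one writes
`ĉ - c` as the propagated errors `α e_prev` and `∑ tₘ eₘ` minus the rounding perturbations
`t₁ d̂₁ θᵢ`, `tₘ d̂ₘ θ⁽ᵐ⁾`, `w θ̂ᵢ`, `ĉ ε` and `α ĉ_prev δ`. Each perturbation is bounded by the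
absolute value of its multiplier times `γᵢ`, `γᵢ₊₁` or `u`, and the triangle inequality
finishes the proof.
-/

open Finset

theorem sum_Icc_one_eq_add_sum_Icc_two {M : Type*} [AddCommMonoid M] (f : ℕ → M) {n : ℕ}
    (hn : 1 ≤ n) : ∑ m ∈ Icc 1 n, f m = f 1 + ∑ m ∈ Icc 2 n, f m := by
  rw [← add_sum_Ioc_eq_sum_Icc hn, ← Icc_add_one_left_eq_Ioc]
  rfl

theorem abs_mul_le_abs_mul_of_abs_le {x θ γ : ℝ} (h : |θ| ≤ γ) : |x * θ| ≤ |x| * γ := by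
  rw [abs_mul]
  exact mul_le_mul_of_nonneg_left h (abs_nonneg x)

theorem abs_sum_mul_le_mul_sum_abs {ι : Type*} (s : Finset ι) (x θ : ι → ℝ) {γ : ℝ}
    (h : ∀ m ∈ s, |θ m| ≤ γ) : |∑ m ∈ s, x m * θ m| ≤ γ * ∑ m ∈ s, |x m| :=
  calc |∑ m ∈ s, x m * θ m| ≤ ∑ m ∈ s, |x m * θ m| := abs_sum_le_sum_abs _ _
    _ ≤ ∑ m ∈ s, |x m| * γ := sum_le_sum fun m hm => abs_mul_le_abs_mul_of_abs_le (h m hm)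
    _ = γ * ∑ m ∈ s, |x m| := by rw [← sum_mul, mul_comm]

theorem computed_sub_exact_eq {n : ℕ} (hn : 1 ≤ n)
    {α chatprev cprev w chat c δ ε θi θi' : ℝ} {t d dhat θ' : ℕ → ℝ}
    (hexact : c = -(α * cprev) - (∑ m ∈ Icc 1 n, t m * d m) - w)
    (hcomp : -((1 + ε) * chat) = α * chatprev * (1 + δ) + t 1 * dhat 1 * (1 + θi)
      + (∑ m ∈ Icc 2 n, t m * dhat m * (1 + θ' m)) + w * (1 + θi')) :
    chat - c = -(α * (chatprev - cprev)) - ∑ m ∈ Icc 1 n, t m * (dhat m - d m)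
      - t 1 * dhat 1 * θi - ∑ m ∈ Icc 2 n, t m * dhat m * θ' m - w * θi'
      - chat * ε - α * chatprev * δ := by
  rw [hexact, sum_Icc_one_eq_add_sum_Icc_two _ hn, sum_Icc_one_eq_add_sum_Icc_two _ hn]
  simp only [mul_sub, mul_add, mul_one, sum_sub_distrib, sum_add_distrib] at hcomp ⊢
  linear_combination -hcomp

theorem stmt_9_general (u : ℝ) (i : ℕ) (hi : 3 ≤ i)
    (α chatprev cprev w chat c δ ε θi θi' : ℝ)
    (t d dhat θ' : ℕ → ℝ)
    (hδ : |δ| ≤ u) (hε : |ε| ≤ u)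
    (hθi : |θi| ≤ (i : ℝ) * u / (1 - (i : ℝ) * u))
    (hθi' : |θi'| ≤ (i : ℝ) * u / (1 - (i : ℝ) * u))
    (hθ' : ∀ m ∈ Finset.Icc 2 (i - 2),
      |θ' m| ≤ ((i : ℝ) + 1) * u / (1 - ((i : ℝ) + 1) * u))
    (hexact : c = -(α * cprev) - (∑ m ∈ Finset.Icc 1 (i - 2), t m * d m) - w)
    (hcomp : -((1 + ε) * chat) = α * chatprev * (1 + δ) + t 1 * dhat 1 * (1 + θi)
      + (∑ m ∈ Finset.Icc 2 (i - 2), t m * dhat m * (1 + θ' m)) + w * (1 + θi')) :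
    |chat - c| ≤ |α * (chatprev - cprev)|
      + (∑ m ∈ Finset.Icc 1 (i - 2), |t m * (dhat m - d m)|)
      + (((i : ℝ) + 1) * u / (1 - ((i : ℝ) + 1) * u))
          * (∑ m ∈ Finset.Icc 2 (i - 2), |t m * dhat m|)
      + ((i : ℝ) * u / (1 - (i : ℝ) * u)) * (|t 1 * dhat 1| + |w|)
      + u * (|chat| + |α * chatprev|) := by
  rw [computed_sub_exact_eq (by omega) hexact hcomp]
  grw [abs_sub, abs_sub, abs_sub, abs_sub, abs_sub, abs_sub, abs_neg, abs_sum_le_sum_abs,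
    abs_mul_le_abs_mul_of_abs_le hθi, abs_sum_mul_le_mul_sum_abs _ _ _ hθ',
    abs_mul_le_abs_mul_of_abs_le hθi', abs_mul_le_abs_mul_of_abs_le hε,
    abs_mul_le_abs_mul_of_abs_le hδ]
  linarith

/-- Theorem 5.3 (case j = i) of the paper: error bound for the leading new
coefficient of the characteristic polynomial of a Hessenberg matrix,
`ĉᵢ⁽ⁱ⁾ = −fl[fl[αᵢ ĉᵢ₋₁⁽ⁱ⁻¹⁾] + fl[Σₘ tₘ ĉ_{i−m−1}⁽ⁱ⁻ᵐ⁻¹⁾ + w]]`,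
where `tₘ = h_{i−m,i} βᵢ⋯β_{i−m+1}` and `w = h_{1i} βᵢ⋯β₂`. -/
theorem stmt_9 (u : ℝ) (hu : 0 ≤ u) (i : ℕ) (hi : 3 ≤ i)
    (hiu : ((i : ℝ) + 1) * u < 1)
    (α chatprev cprev w chat c δ ε θi θi' : ℝ)
    (t d dhat θ' : ℕ → ℝ)
    (hδ : |δ| ≤ u) (hε : |ε| ≤ u)
    (hθi : |θi| ≤ (i : ℝ) * u / (1 - (i : ℝ) * u))
    (hθi' : |θi'| ≤ (i : ℝ) * u / (1 - (i : ℝ) * u))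
    (hθ' : ∀ m ∈ Finset.Icc 2 (i - 2),
      |θ' m| ≤ ((i : ℝ) + 1) * u / (1 - ((i : ℝ) + 1) * u))
    (hexact : c = -(α * cprev) - (∑ m ∈ Finset.Icc 1 (i - 2), t m * d m) - w)
    (hcomp : -((1 + ε) * chat) = α * chatprev * (1 + δ) + t 1 * dhat 1 * (1 + θi)
      + (∑ m ∈ Finset.Icc 2 (i - 2), t m * dhat m * (1 + θ' m)) + w * (1 + θi')) :
    |chat - c| ≤ |α * (chatprev - cprev)|
      + (∑ m ∈ Finset.Icc 1 (i - 2), |t m * (dhat m - d m)|)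
      + (((i : ℝ) + 1) * u / (1 - ((i : ℝ) + 1) * u))
          * (∑ m ∈ Finset.Icc 2 (i - 2), |t m * dhat m|)
      + ((i : ℝ) * u / (1 - (i : ℝ) * u)) * (|t 1 * dhat 1| + |w|)
      + u * (|chat| + |α * chatprev|) :=
  stmt_9_general u i hi α chatprev cprev w chat c δ ε θi θi' t d dhat θ' hδ hε hθi hθi' hθ' hexact
    hcomp
end

section
/- Let n ≥ 1 and let H be the n×n Hansen matrix, the symmetric tridiagonal matrix with H_{1,1} = 1, H_{i,i} = 2 for 2 ≤ i ≤ n, H_{i,i−1} = H_{i−1,i} = −1 for 2 ≤ i ≤ n, and all other entries zero. Write its characteristic polynomial as det(λI − H) = λⁿ + c₁λ^{n−1} + ⋯ + c_{n−1}λ + cₙ. Then for 1 ≤ k ≤ n, c_{n−k+1} = (−1)^{n−k+1} · binomial(n+k−1, n−k+1); equivalently, cⱼ = (−1)ʲ · binomial(2n−j, j) for 1 ≤ j ≤ n. -/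
/-!
Expanding `det (X • 1 - Hₙ)` along its last row gives the three-term recurrence
`pₙ₊₂ = (X - 2) pₙ₊₁ - pₙ` with `p₀ = 1`, `p₁ = X - 1`. By induction and Pascal's rule
the coefficient of `X ^ m` in `pₙ` is `(-1) ^ (n + m) * C(n + m, 2m)`, and
`C(n + m, 2m) = C(n + m, n - m)` for `m ≤ n`.
-/

open Polynomial Matrix

namespace Matrix

variable {R : Type*} [CommRing R]

theorem det_succ_eq_mul_det_of_col_last_eq_zero {n : ℕ}
    (M : Matrix (Fin (n + 1)) (Fin (n + 1)) R)
    (hcol : ∀ i : Fin n, M i.castSucc (Fin.last n) = 0) :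
    M.det = M (Fin.last n) (Fin.last n) * (M.submatrix Fin.castSucc Fin.castSucc).det := by
  rw [det_succ_column M (Fin.last n), Fin.sum_univ_castSucc]
  simp only [hcol, mul_zero, zero_mul, Finset.sum_const_zero, zero_add, Fin.succAbove_last,
    Fin.val_last, ← two_mul, pow_mul, neg_one_sq, one_pow, one_mul]

theorem det_succ_succ_of_last_row_col_eq_zero {n : ℕ} (A : Matrix (Fin (n + 2)) (Fin (n + 2)) R)
    (hrow : ∀ i : Fin n, A (Fin.last _) i.castSucc.castSucc = 0)
    (hcol : ∀ i : Fin n, A i.castSucc.castSucc (Fin.last _) = 0) :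
    A.det = A (Fin.last _) (Fin.last _) * (A.submatrix Fin.castSucc Fin.castSucc).det
      - A (Fin.last _) (Fin.last n).castSucc * A (Fin.last n).castSucc (Fin.last _)
        * (A.submatrix (Fin.castSucc ∘ Fin.castSucc) (Fin.castSucc ∘ Fin.castSucc)).det := by
  rw [det_succ_row A (Fin.last (n + 1)), Fin.sum_univ_castSucc, Fin.sum_univ_castSucc]
  simp only [hrow, mul_zero, zero_mul, Finset.sum_const_zero, zero_add, Fin.succAbove_last]
  set B := A.submatrix Fin.castSucc (Fin.last n).castSucc.succAbove
  have hB : B.det = A (Fin.last n).castSucc (Fin.last _)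
      * (A.submatrix (Fin.castSucc ∘ Fin.castSucc) (Fin.castSucc ∘ Fin.castSucc)).det := by
    rw [det_succ_eq_mul_det_of_col_last_eq_zero B (fun i => by simpa [B] using hcol i)]
    have hcols : (Fin.last n).castSucc.succAbove ∘ Fin.castSucc = Fin.castSucc ∘ Fin.castSucc :=
      funext fun j =>
        Fin.succAbove_of_castSucc_lt _ _ (Fin.castSucc_lt_castSucc_iff.2 j.castSucc_lt_last)
    simp only [B, submatrix_apply, submatrix_submatrix, Fin.succAbove_castSucc_self, Fin.succ_last,
      hcols]
  rw [hB, Fin.val_last, Fin.val_castSucc, Fin.val_last,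
    Odd.neg_one_pow ⟨n, by ring⟩, Even.neg_one_pow ⟨n + 1, rfl⟩]
  ring

theorem charmatrix_submatrix {m n : Type*} [DecidableEq m] [DecidableEq n] [Fintype m]
    [Fintype n] (M : Matrix n n R) {f : m → n} (hf : Function.Injective f) :
    (charmatrix M).submatrix f f = charmatrix (M.submatrix f f) := by
  ext i j : 1
  simp [charmatrix_apply, diagonal_apply, hf.eq_iff]

end Matrix

def hansen (n : ℕ) : Matrix (Fin n) (Fin n) ℝ :=
  Matrix.of fun i j =>
    if (i : ℕ) = j then (if (i : ℕ) = 0 then 1 else 2)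
    else if (i : ℕ) + 1 = j ∨ (j : ℕ) + 1 = i then -1 else 0

theorem charmatrix_hansen_submatrix {m n : ℕ} {f : Fin m → Fin n} (hf : ∀ i, (f i : ℕ) = i) :
    (charmatrix (hansen n)).submatrix f f = charmatrix (hansen m) := by
  have hinj : Function.Injective f := fun i j h => Fin.ext (by simpa [hf] using congrArg Fin.val h)
  rw [charmatrix_submatrix _ hinj]
  congr 1
  ext i j
  simp [hansen, hf]

section

variable {n : ℕ}

theorem charmatrix_hansen_self {i : Fin n} (hi : (i : ℕ) ≠ 0) :
    charmatrix (hansen n) i i = X - 2 := by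
  simp [charmatrix_apply_eq, hansen, hi, map_ofNat]

theorem charmatrix_hansen_of_adjacent {i j : Fin n} (h : (i : ℕ) + 1 = j ∨ (j : ℕ) + 1 = i) :
    charmatrix (hansen n) i j = 1 := by
  rw [charmatrix_apply_ne _ _ _ (Fin.ne_of_val_ne (by omega)), hansen, of_apply, if_neg (by omega),
    if_pos h, map_neg, neg_neg, map_one]

theorem charmatrix_hansen_of_add_two_le {i j : Fin n} (h : (i : ℕ) + 2 ≤ j ∨ (j : ℕ) + 2 ≤ i) :
    charmatrix (hansen n) i j = 0 := by
  rw [charmatrix_apply_ne _ _ _ (Fin.ne_of_val_ne (by omega)), hansen, of_apply, if_neg (by omega),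
    if_neg (by omega), map_zero, neg_zero]

end

theorem charpoly_hansen_zero : (hansen 0).charpoly = 1 :=
  charpoly_isEmpty

theorem charpoly_hansen_one : (hansen 1).charpoly = X - 1 := by
  simp [charpoly, charmatrix_apply_eq, hansen]

theorem charpoly_hansen_add_two (n : ℕ) :
    (hansen (n + 2)).charpoly = (X - 2) * (hansen (n + 1)).charpoly - (hansen n).charpoly := by
  have hlast : ((Fin.last (n + 1) : Fin (n + 2)) : ℕ) = (Fin.last n).castSucc + 1 := rfl
  rw [charpoly, det_succ_succ_of_last_row_col_eq_zero _
      (fun i => charmatrix_hansen_of_add_two_le (by simp))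
      (fun i => charmatrix_hansen_of_add_two_le (by simp)),
    charmatrix_hansen_self (by simp), charmatrix_hansen_of_adjacent (Or.inr hlast.symm),
    charmatrix_hansen_of_adjacent (Or.inl hlast.symm),
    charmatrix_hansen_submatrix (f := Fin.castSucc) (fun _ => rfl),
    charmatrix_hansen_submatrix (f := Fin.castSucc ∘ Fin.castSucc) (fun _ => rfl),
    one_mul, one_mul, charpoly, charpoly]

theorem Nat.choose_add_two_add_choose (N k : ℕ) :
    (N + 2).choose (k + 2) + N.choose (k + 2) = N.choose k + 2 * (N + 1).choose (k + 2) := by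
  have h1 : (N + 2).choose (k + 2) = (N + 1).choose (k + 1) + (N + 1).choose (k + 2) :=
    Nat.choose_succ_succ' _ _
  have h2 : (N + 1).choose (k + 1) = N.choose k + N.choose (k + 1) := Nat.choose_succ_succ' _ _
  have h3 : (N + 1).choose (k + 2) = N.choose (k + 1) + N.choose (k + 2) :=
    Nat.choose_succ_succ' _ _
  omega

/-- Writing `C(n + m, 2m)` rather than `C(n + m, n - m)` makes the formula hold for all `m`
(both sides vanish for `m > n`), so the induction has no boundary cases. -/
theorem coeff_eq_of_hansen_recurrence {R : Type*} [CommRing R] (p : ℕ → R[X]) (h0 : p 0 = 1)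
    (h1 : p 1 = X - 1) (hrec : ∀ n, p (n + 2) = (X - 2) * p (n + 1) - p n) (n m : ℕ) :
    (p n).coeff m = (-1) ^ (n + m) * ((n + m).choose (2 * m) : R) := by
  have hstep : ∀ n m, (p (n + 2)).coeff m
      = (X * p (n + 1)).coeff m - 2 * (p (n + 1)).coeff m - (p n).coeff m := by
    intro n m
    rw [hrec, sub_mul, ← C_ofNat, coeff_sub, coeff_sub, coeff_C_mul]
  induction n using Nat.twoStepInduction generalizing m with
  | zero =>
    rcases m with _ | m
    · simp [h0]
    · simp [h0, coeff_one, Nat.choose_eq_zero_of_lt (by omega : m + 1 < 2 * (m + 1))]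
  | one =>
    rcases m with _ | _ | m
    · simp [h1]
    · simp [h1, coeff_one]
    · simp [h1, coeff_X, coeff_one,
        Nat.choose_eq_zero_of_lt (by omega : 1 + (m + 2) < 2 * (m + 2))]
  | more n ih₀ ih₁ =>
    rcases m with _ | m
    · rw [hstep, coeff_X_mul_zero, ih₀, ih₁]
      simp only [mul_zero, Nat.choose_zero_right, add_zero]
      ring
    · rw [hstep, coeff_X_mul, ih₀, ih₁, ih₁]
      have key :=
        congrArg (Nat.cast : ℕ → R) (Nat.choose_add_two_add_choose (n + m + 1) (2 * m))
      push_cast at key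
      rw [show n + 2 + (m + 1) = n + m + 1 + 2 by ring, show n + 1 + m = n + m + 1 by ring,
        show n + 1 + (m + 1) = n + m + 1 + 1 by ring, show n + (m + 1) = n + m + 1 by ring,
        show 2 * (m + 1) = 2 * m + 2 by ring]
      linear_combination -(-1) ^ (n + m + 1) * key

theorem coeff_charpoly_hansen (n m : ℕ) :
    (hansen n).charpoly.coeff m = (-1) ^ (n + m) * ((n + m).choose (2 * m) : ℝ) :=
  coeff_eq_of_hansen_recurrence (fun n => (hansen n).charpoly) charpoly_hansen_zero
    charpoly_hansen_one charpoly_hansen_add_two n m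

theorem coeff_charpoly_hansen_of_le {n m : ℕ} (hm : m ≤ n) :
    (hansen n).charpoly.coeff m = (-1) ^ (n - m) * ((n + m).choose (n - m) : ℝ) := by
  rw [coeff_charpoly_hansen, Nat.choose_symm_of_eq_add (by omega : n + m = 2 * m + (n - m))]
  congr 1
  rw [show n + m = n - m + 2 * m by omega, pow_add, pow_mul, neg_one_sq, one_pow, mul_one]

theorem eq_hansen {n : ℕ} (hn : 0 < n) (H : Matrix (Fin n) (Fin n) ℝ)
    (h11 : H ⟨0, hn⟩ ⟨0, hn⟩ = 1)
    (hdiag : ∀ i : Fin n, 1 ≤ i.val → H i i = 2)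
    (hsub : ∀ i j : Fin n, i.val + 1 = j.val → H i j = -1 ∧ H j i = -1)
    (hzero : ∀ i j : Fin n, i.val + 2 ≤ j.val ∨ j.val + 2 ≤ i.val → H i j = 0) :
    H = hansen n := by
  ext i j
  rw [hansen, of_apply]
  split_ifs with hij hi hadj
  · obtain rfl : i = j := Fin.ext hij
    rwa [show i = ⟨0, hn⟩ from Fin.ext hi]
  · obtain rfl : i = j := Fin.ext hij
    exact hdiag i (by omega)
  · rcases hadj with hadj | hadj
    · exact (hsub i j hadj).1
    · exact (hsub j i hadj).2
  · exact hzero i j (by omega)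

/-- § 7.2 of the paper: the coefficients of the characteristic polynomial
`λⁿ + c₁λ^{n−1} + ⋯ + cₙ` of Hansen's matrix satisfy
`c_{n−k+1} = (−1)^{n−k+1} C(n+k−1, n−k+1)` for `1 ≤ k ≤ n`; equivalently
`cⱼ = (−1)ʲ C(2n−j, j)` for `1 ≤ j ≤ n`. -/
theorem stmt_16 (n : ℕ) (hn : 1 ≤ n) (H : Matrix (Fin n) (Fin n) ℝ)
    (h11 : H ⟨0, by omega⟩ ⟨0, by omega⟩ = 1)
    (hdiag : ∀ i : Fin n, 1 ≤ i.val → H i i = 2)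
    (hsub : ∀ i j : Fin n, i.val + 1 = j.val → H i j = -1 ∧ H j i = -1)
    (hzero : ∀ i j : Fin n, i.val + 2 ≤ j.val ∨ j.val + 2 ≤ i.val → H i j = 0) :
    (∀ k, 1 ≤ k → k ≤ n →
      H.charpoly.coeff (k - 1)
        = (-1 : ℝ) ^ (n - k + 1) * ((n + k - 1).choose (n - k + 1) : ℝ)) ∧
    (∀ j, 1 ≤ j → j ≤ n →
      H.charpoly.coeff (n - j) = (-1 : ℝ) ^ j * ((2 * n - j).choose j : ℝ)) := by
  obtain rfl := eq_hansen hn H h11 hdiag hsub hzero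
  refine ⟨fun k hk hkn => ?_, fun j hj hjn => ?_⟩
  · rw [coeff_charpoly_hansen_of_le (by omega), show n - (k - 1) = n - k + 1 by omega,
      show n + (k - 1) = n + k - 1 by omega]
  · rw [coeff_charpoly_hansen_of_le (by omega), show n - (n - j) = j by omega,
      show n + (n - j) = 2 * n - j by omega]
end
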